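/- The projection φ : Γ₂ⁿ → Δ₂ⁿ, forgetting the diagonal coordinates d₂,…,d_{n−2}, is surjective: for every r ∈ Δ₂ⁿ there exist d₂,…,d_{n−2} satisfying all the triangle inequalities. -/
import Mathlib


/-- The second hypersimplex `Δ₂ⁿ` for `n = m + 3`. -/
def Hypersimplex2 (m : ℕ) : Set (Fin (m + 3) → ℝ) :=
  {r | (∀ i, 0 ≤ r i ∧ r i ≤ 1) ∧ ∑ i, r i = 2}

/-- The Gelfand–Tsetlin polytope `Γ₂ⁿ` for `n = m + 3`, with points `(r, d)` where
`r = (r₁, …, rₙ)` and `d = (d₁, …, d_{n-1})` (the pinned diagonals `d₁ = r₁`,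
`d_{n-1} = rₙ` are recorded as linear equations).  For each `1 ≤ i ≤ n - 2`
(i.e. `j : Fin (m + 1)` with `i = j + 1`) the triangle inequalities
`|dᵢ - dᵢ₊₁| ≤ rᵢ₊₁` and `dᵢ + dᵢ₊₁ ≥ rᵢ₊₁` hold. -/
def GTPolytope (m : ℕ) : Set ((Fin (m + 3) → ℝ) × (Fin (m + 2) → ℝ)) :=
  {p | p.1 ∈ Hypersimplex2 m ∧
    p.2 0 = p.1 0 ∧ p.2 (Fin.last (m + 1)) = p.1 (Fin.last (m + 2)) ∧
    ∀ j : Fin (m + 1),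
      p.2 j.castSucc - p.2 j.succ ≤ p.1 j.succ.castSucc ∧
      p.2 j.succ - p.2 j.castSucc ≤ p.1 j.succ.castSucc ∧
      p.1 j.succ.castSucc ≤ p.2 j.castSucc + p.2 j.succ}

/-- The projection `φ : Γ₂ⁿ → Δ₂ⁿ`, `(r, d) ↦ r`, is surjective: every `r ∈ Δ₂ⁿ`
admits diagonals `d` satisfying all the triangle inequalities. -/
theorem gtProjection_surjective (m : ℕ) (r : Fin (m + 3) → ℝ) (hr : r ∈ Hypersimplex2 m) :
    ∃ d : Fin (m + 2) → ℝ, (r, d) ∈ GTPolytope m := by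
  obtain ⟨hbd, hsum⟩ := hr
  set f : ℕ → ℝ := fun i => if h : i < m + 3 then r ⟨i, h⟩ else 0 with hf
  have hf0 : ∀ i, 0 ≤ f i := by
    intro i; simp only [hf]; split
    · exact (hbd _).1
    · exact le_rfl
  set S : ℕ → ℝ := fun k => ∑ i ∈ Finset.range k, f i with hS
  have hStot : S (m + 3) = 2 := by
    rw [hS]
    simp only
    rw [← hsum, Finset.sum_range]
    apply Finset.sum_congr rfl
    intro i _
    simp [hf, i.isLt]
  have hSnn : ∀ k, 0 ≤ S k := fun k => Finset.sum_nonneg fun i _ => hf0 i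
  have hSle : ∀ k, k ≤ m + 3 → S k ≤ 2 := by
    intro k hk
    rw [← hStot]
    exact Finset.sum_le_sum_of_subset_of_nonneg
      (Finset.range_subset_range.mpr hk) (fun i _ _ => hf0 i)
  have hSsucc : ∀ k, S (k + 1) = S k + f k := fun k => Finset.sum_range_succ f k
  refine ⟨fun j => min (S (j.val + 1)) (2 - S (j.val + 1)), ?_, ?_, ?_, ?_⟩
  · exact ⟨hbd, hsum⟩
  · show min (S 1) (2 - S 1) = r 0
    have h1 : S 1 = r 0 := by
      rw [hSsucc, hS]; simp [hf]
    rw [h1, min_eq_left (by have := (hbd 0).2; linarith)]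
  · show min (S (m + 2)) (2 - S (m + 2)) = r (Fin.last (m + 2))
    have h1 : S (m + 3) = S (m + 2) + r (Fin.last (m + 2)) := by
      rw [hSsucc]
      congr 1
      simp [hf]
      rfl
    have h2 : S (m + 2) = 2 - r (Fin.last (m + 2)) := by
      rw [hStot] at h1; linarith
    have := (hbd (Fin.last (m + 2))).1
    have := (hbd (Fin.last (m + 2))).2
    rw [h2, min_eq_right (by linarith)]
    ring
  · intro j
    have hjv : (j.succ.castSucc : Fin (m + 3)) = ⟨j.val + 1, by omega⟩ := by
      ext; simp
    have hfj : f (j.val + 1) = r j.succ.castSucc := by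
      rw [hjv]; simp only [hf]; rw [dif_pos (by omega)]
    have hstep : S (j.val + 2) = S (j.val + 1) + r j.succ.castSucc := by
      rw [← hfj]; exact hSsucc (j.val + 1)
    have hub : S (j.val + 2) ≤ 2 := hSle _ (by omega)
    have hnn : 0 ≤ S (j.val + 1) := hSnn _
    have ha0 : 0 ≤ r j.succ.castSucc := (hbd _).1
    have ha1 : r j.succ.castSucc ≤ 1 := (hbd _).2
    have hc : (j.castSucc.val : ℕ) = j.val := rfl
    have hsv : (j.succ.val : ℕ) = j.val + 1 := rfl
    simp only [hc, hsv]
    rcases min_cases (S (j.val + 1)) (2 - S (j.val + 1)) with ⟨h1, h1'⟩ | ⟨h1, h1'⟩ <;>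
      rcases min_cases (S (j.val + 1 + 1)) (2 - S (j.val + 1 + 1)) with ⟨h2, h2'⟩ | ⟨h2, h2'⟩ <;>
      rw [h1, h2] <;>
      refine ⟨?_, ?_, ?_⟩ <;>
      · have : S (j.val + 1 + 1) = S (j.val + 1) + r j.succ.castSucc := hstep
        linarith
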